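/- arXiv:2603.29556 — 3 statements merged into one kernel-verified Lean document; each statement's English description precedes it below -/
import Mathlib

section
/- The transpose map T : M_n(ℂ) → M_n(ℂ) is a positive unital isometry whose completely bounded norm equals n. -/
/-!
Transposition is the adjoint composed with entrywise conjugation, and both are isometric. The
`(c, d)` block of `(id ⊗ T) M` is the `(d, c)` block of `M`, a compression of `M`; a matrix whose
`n × n` blocks all have norm at most `α` has norm at most `n α` (Cauchy–Schwarz across the
blocks). The bound is attained on the flip `e_a ⊗ e_b ↦ e_b ⊗ e_a`, a unitary, which `id ⊗ T`
sends to `n` times the projection onto the maximally entangled vector `∑ₐ e_a ⊗ e_a`.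
-/

open Matrix ComplexOrder
open scoped Matrix.Norms.L2Operator

/-- The `k`-th amplification `Id_{M_k} ⊗ φ` of a map `φ : Mₙ(ℂ) → M_m(ℂ)`, regarded as a map
of matrices indexed by products. -/
def amp {n m : ℕ} (φ : Matrix (Fin n) (Fin n) ℂ → Matrix (Fin m) (Fin m) ℂ) (k : ℕ)
    (M : Matrix (Fin k × Fin n) (Fin k × Fin n) ℂ) :
    Matrix (Fin k × Fin m) (Fin k × Fin m) ℂ :=
  fun p q => φ (fun a b => M (p.1, a) (q.1, b)) p.2 q.2

open WithLp

lemma EuclideanSpace.norm_sq_eq_sum_slices {𝕜 κ ι : Type*} [RCLike 𝕜] [Fintype κ] [Fintype ι]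
    (x : EuclideanSpace 𝕜 (κ × ι)) :
    ‖x‖ ^ 2 = ∑ d, ‖toLp 2 (fun j => x (j, d))‖ ^ 2 := by
  simp only [EuclideanSpace.norm_sq_eq, Fintype.sum_prod_type_right]

namespace Matrix

variable {𝕜 : Type*} [RCLike 𝕜]

lemma map_star_mulVec {m n : Type*} [Fintype n] (A : Matrix m n 𝕜) (v : n → 𝕜) :
    A.map star *ᵥ v = star (A *ᵥ star v) := by
  ext i
  simp [mulVec, dotProduct, star_sum]

lemma mulVec_apply_eq_sum_blocks {κ κ' ι ι' : Type*} [Fintype κ'] [Fintype ι']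
    (N : Matrix (κ × ι) (κ' × ι') 𝕜) (x : κ' × ι' → 𝕜) (i : κ) (c : ι) :
    (N *ᵥ x) (i, c) = ∑ d, (N.submatrix (·, c) (·, d) *ᵥ fun j => x (j, d)) i := by
  simp only [mulVec, dotProduct, Fintype.sum_prod_type_right, submatrix_apply]

variable {l m n o : Type*} [Fintype l] [Fintype m] [Fintype n] [Fintype o] [DecidableEq n]

lemma l2_opNorm_one_le : ‖(1 : Matrix n n 𝕜)‖ ≤ 1 := by
  rw [← diagonal_one, l2_opNorm_diagonal]
  exact pi_norm_le_iff_of_nonneg zero_le_one |>.mpr fun _ => by simp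

lemma l2_opNorm_one_submatrix_id_le [DecidableEq m] {f : n → m} (hf : f.Injective) :
    ‖(1 : Matrix m m 𝕜).submatrix id f‖ ≤ 1 := by
  have hP : ((1 : Matrix m m 𝕜).submatrix id f)ᴴ * (1 : Matrix m m 𝕜).submatrix id f = 1 := by
    rw [conjTranspose_submatrix, conjTranspose_one,
      ← submatrix_mul _ _ _ _ _ Function.bijective_id, Matrix.mul_one]
    exact submatrix_one f hf
  have h := l2_opNorm_conjTranspose_mul_self ((1 : Matrix m m 𝕜).submatrix id f)
  rw [hP] at h
  nlinarith [l2_opNorm_one_le (𝕜 := 𝕜) (n := n), norm_nonneg ((1 : Matrix m m 𝕜).submatrix id f)]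

lemma l2_opNorm_submatrix_le [DecidableEq l] [DecidableEq m] [DecidableEq o] (A : Matrix m n 𝕜)
    {e : l → m} {f : o → n} (he : e.Injective) (hf : f.Injective) :
    ‖A.submatrix e f‖ ≤ ‖A‖ := by
  have hA : A.submatrix e f =
      ((1 : Matrix m m 𝕜).submatrix id e)ᴴ * A * (1 : Matrix n n 𝕜).submatrix id f := by
    rw [conjTranspose_submatrix, conjTranspose_one]
    ext i j
    simp [mul_apply, one_apply]
  calc ‖A.submatrix e f‖
      ≤ ‖((1 : Matrix m m 𝕜).submatrix id e)ᴴ‖ * ‖A‖ * ‖(1 : Matrix n n 𝕜).submatrix id f‖ := by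
        rw [hA]
        exact (l2_opNorm_mul _ _).trans (by gcongr; exact l2_opNorm_mul _ _)
    _ ≤ 1 * ‖A‖ * 1 := by
        rw [l2_opNorm_conjTranspose]
        gcongr
        exacts [l2_opNorm_one_submatrix_id_le he, l2_opNorm_one_submatrix_id_le hf]
    _ = ‖A‖ := by ring

lemma l2_opNorm_map_star_le (A : Matrix m n 𝕜) : ‖A.map star‖ ≤ ‖A‖ :=
  ContinuousLinearMap.opNorm_le_bound _ (norm_nonneg _) fun x => by
    rw [LinearEquiv.trans_apply, LinearMap.coe_toContinuousLinearMap', toLpLin_apply,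
      map_star_mulVec]
    simpa [EuclideanSpace.norm_eq] using A.l2_opNorm_mulVec (toLp 2 (star (ofLp x)))

lemma l2_opNorm_map_star (A : Matrix m n 𝕜) : ‖A.map star‖ = ‖A‖ := by
  refine le_antisymm A.l2_opNorm_map_star_le ?_
  have hA : (A.map star).map star = A := by ext; simp
  simpa only [hA] using (A.map star).l2_opNorm_map_star_le

lemma l2_opNorm_transpose [DecidableEq m] (A : Matrix m n 𝕜) : ‖Aᵀ‖ = ‖A‖ := by
  have hA : Aᵀ = (A.map star)ᴴ := by ext; simp
  rw [hA, l2_opNorm_conjTranspose, l2_opNorm_map_star]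

lemma norm_le_l2_opNorm_of_mulVec_eq_smul (A : Matrix n n 𝕜) {μ : 𝕜} {v : n → 𝕜} (hv : v ≠ 0)
    (h : A *ᵥ v = μ • v) : ‖μ‖ ≤ ‖A‖ := by
  have hAv := A.l2_opNorm_mulVec (toLp 2 v)
  have hv' : 0 < ‖toLp 2 v‖ := norm_pos_iff.mpr (by simpa using hv)
  rw [ofLp_toLp, h] at hAv
  simp only [EuclideanSpace.equiv, PiLp.continuousLinearEquiv_symm_apply, toLp_smul,
    norm_smul] at hAv
  exact le_of_mul_le_mul_right hAv hv'

lemma l2_opNorm_le_of_norm_blocks_le {κ κ' ι ι' : Type*} [Fintype κ] [Fintype κ'] [Fintype ι]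
    [Fintype ι'] [DecidableEq κ'] [DecidableEq ι'] (N : Matrix (κ × ι) (κ' × ι') 𝕜) {α : ℝ}
    (hα : 0 ≤ α) (h : ∀ c d, ‖N.submatrix (·, c) (·, d)‖ ≤ α) :
    ‖N‖ ≤ √(Fintype.card ι * Fintype.card ι') * α := by
  refine ContinuousLinearMap.opNorm_le_bound _ (by positivity) fun x => ?_
  rw [LinearEquiv.trans_apply, LinearMap.coe_toContinuousLinearMap', toLpLin_apply]
  set slice : ι' → EuclideanSpace 𝕜 κ' := fun d => toLp 2 fun j => x (j, d)
  have hrow : ∀ c, ‖toLp 2 fun i => (N *ᵥ ofLp x) (i, c)‖ ≤ α * ∑ d, ‖slice d‖ := fun c => by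
    have hsum : (toLp 2 fun i => (N *ᵥ ofLp x) (i, c) : EuclideanSpace 𝕜 κ) =
        ∑ d, toLp 2 (N.submatrix (·, c) (·, d) *ᵥ ofLp (slice d)) := by
      ext i
      simp [mulVec_apply_eq_sum_blocks, slice]
    rw [hsum, Finset.mul_sum]
    refine (norm_sum_le _ _).trans (Finset.sum_le_sum fun d _ => ?_)
    exact (l2_opNorm_mulVec _ _).trans (by gcongr; exact h c d)
  refine le_of_sq_le_sq ?_ (by positivity)
  calc ‖toLp 2 (N *ᵥ ofLp x)‖ ^ 2
      = ∑ c, ‖toLp 2 fun i => (N *ᵥ ofLp x) (i, c)‖ ^ 2 :=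
        EuclideanSpace.norm_sq_eq_sum_slices _
    _ ≤ ∑ _c : ι, (α * ∑ d, ‖slice d‖) ^ 2 :=
        Finset.sum_le_sum fun c _ => by gcongr; exact hrow c
    _ ≤ ∑ _c : ι, α ^ 2 * (Fintype.card ι' * ∑ d, ‖slice d‖ ^ 2) := by
        gcongr with c
        rw [mul_pow]
        gcongr
        exact sq_sum_le_card_mul_sum_sq
    _ = (√(Fintype.card ι * Fintype.card ι') * α * ‖x‖) ^ 2 := by
        rw [mul_pow, mul_pow, Real.sq_sqrt (by positivity),
          EuclideanSpace.norm_sq_eq_sum_slices x, Finset.sum_const, Finset.card_univ, nsmul_eq_mul]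
        ring

end Matrix

section Transpose

variable {n : ℕ}

lemma amp_transpose_submatrix {k : ℕ} (M : Matrix (Fin k × Fin n) (Fin k × Fin n) ℂ)
    (c d : Fin n) :
    (amp (fun x => x.transpose) k M).submatrix (·, c) (·, d) = M.submatrix (·, d) (·, c) :=
  rfl

theorem norm_amp_transpose_le (k : ℕ) (M : Matrix (Fin k × Fin n) (Fin k × Fin n) ℂ) :
    ‖amp (fun x => x.transpose) k M‖ ≤ n * ‖M‖ := by
  have h := l2_opNorm_le_of_norm_blocks_le _ (norm_nonneg M) fun c d => by
    rw [amp_transpose_submatrix]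
    exact M.l2_opNorm_submatrix_le (Prod.mk_left_injective d) (Prod.mk_left_injective c)
  simpa [Real.sqrt_mul_self] using h

lemma amp_transpose_flip :
    amp (fun x => x.transpose) n (Equiv.Perm.permMatrix ℂ (Equiv.prodComm (Fin n) (Fin n))) =
      vecMulVec (fun p => (1 : Matrix (Fin n) (Fin n) ℂ) p.1 p.2)
        (fun p => (1 : Matrix (Fin n) (Fin n) ℂ) p.1 p.2) := by
  ext p q
  simp only [amp, Equiv.Perm.permMatrix, vecMulVec_apply, PEquiv.toMatrix_apply, one_apply,
    transpose, of_apply, Equiv.toPEquiv_apply, Option.mem_def, Option.some.injEq, Prod.ext_iff,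
    Equiv.prodComm_apply, Prod.fst_swap, Prod.snd_swap]
  split_ifs <;> simp_all [eq_comm]

theorem natCast_le_norm_amp_transpose_flip (hn : 0 < n) :
    (n : ℝ) ≤
      ‖amp (fun x => x.transpose) n (Equiv.Perm.permMatrix ℂ (Equiv.prodComm (Fin n) (Fin n)))‖ := by
  set v : Fin n × Fin n → ℂ := fun p => (1 : Matrix (Fin n) (Fin n) ℂ) p.1 p.2
  have hv : v ≠ 0 := fun h => by simpa [v] using congr_fun h (⟨0, hn⟩, ⟨0, hn⟩)
  have hvv : v ⬝ᵥ v = n := by simp [v, dotProduct, one_apply, Fintype.sum_prod_type]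
  simpa using norm_le_l2_opNorm_of_mulVec_eq_smul _ hv (μ := (n : ℂ)) <| by
    rw [amp_transpose_flip, vecMulVec_mulVec, hvv, op_smul_eq_smul]

end Transpose

/-- the transpose map `T : Mₙ(ℂ) → Mₙ(ℂ)` is a positive unital isometry
(for the operator norm) whose completely bounded norm equals `n`:
`n` bounds all amplifications and is the least such bound. -/
theorem stmt6 (n : ℕ) (hn : 0 < n) :
    (∀ M : Matrix (Fin n) (Fin n) ℂ, M.PosSemidef → M.transpose.PosSemidef) ∧
    (1 : Matrix (Fin n) (Fin n) ℂ).transpose = 1 ∧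
    (∀ M : Matrix (Fin n) (Fin n) ℂ, ‖M.transpose‖ = ‖M‖) ∧
    (∀ (k : ℕ) (M : Matrix (Fin k × Fin n) (Fin k × Fin n) ℂ),
      ‖amp (fun x => x.transpose) k M‖ ≤ (n : ℝ) * ‖M‖) ∧
    (∀ c : ℝ, (∀ (k : ℕ) (M : Matrix (Fin k × Fin n) (Fin k × Fin n) ℂ),
      ‖amp (fun x => x.transpose) k M‖ ≤ c * ‖M‖) → (n : ℝ) ≤ c) := by
  refine ⟨fun M hM => hM.transpose, transpose_one, l2_opNorm_transpose, norm_amp_transpose_le,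
    fun c hc => ?_⟩
  have : Nonempty (Fin n) := ⟨⟨0, hn⟩⟩
  simpa [permMatrix_l2_opNorm_eq] using (natCast_le_norm_amp_transpose_flip hn).trans (hc n _)
end

section
/- Let Ψ : M_n(ℂ) → M_m(ℂ) be a linear map admitting completely positive maps Φ₁, Φ₂ : M_n(ℂ) → M_m(ℂ) such that the block matrix [[Choi(Φ₁), Choi(Ψ)],[Choi(Ψ)*, Choi(Φ₂)]] is positive. Then ‖Ψ‖_cb ≤ √(‖Φ₁‖ · ‖Φ₂‖). -/
open Matrix ComplexOrder
open scoped Matrix.Norms.L2Operator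

/-- Complete positivity of `φ : Mₙ(ℂ) → M_m(ℂ)`. -/
def IsCompletelyPositive {n m : ℕ}
    (φ : Matrix (Fin n) (Fin n) ℂ → Matrix (Fin m) (Fin m) ℂ) : Prop :=
  ∀ (k : ℕ) (M : Matrix (Fin k × Fin n) (Fin k × Fin n) ℂ),
    M.PosSemidef → (amp φ k M).PosSemidef

/-- The Choi matrix `∑ᵢⱼ eᵢⱼ ⊗ φ(eᵢⱼ) ∈ Mₙ ⊗ M_m` of `φ : Mₙ(ℂ) → M_m(ℂ)`. -/
def choi {n m : ℕ} (φ : Matrix (Fin n) (Fin n) ℂ →ₗ[ℂ] Matrix (Fin m) (Fin m) ℂ) :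
    Matrix (Fin n × Fin m) (Fin n × Fin m) ℂ :=
  fun p q => φ (Matrix.single p.1 q.1 1) p.2 q.2


/-!
The `k`-th amplification of the block map `[[Φ₁, Ψ], [Ψ*, Φ₂]]` is a compression of the Kronecker
product of its input with the block Choi matrix, so positivity of the block Choi matrix makes the
block map completely positive. Applied to the positive matrix `[[‖M‖, M], [M*, ‖M‖]]` this gives a
positive block matrix `[[‖M‖ (1 ⊗ Φ₁(1)), Ψₖ(M)], [Ψₖ(M)*, ‖M‖ (1 ⊗ Φ₂(1))]]`. Finally, the corner
of a positive block matrix `[[A, X], [X*, B]]` satisfies `‖X‖² ≤ ‖A‖ ‖B‖`: writing the block matrix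
as `L* L` with `L = [L₁ L₂]` gives `X = L₁* L₂`, `A = L₁* L₁` and `B = L₂* L₂`.
-/

open scoped Kronecker MatrixOrder

theorem CStarRing.norm_one_le {E : Type*} [NormedRing E] [StarRing E] [CStarRing E] :
    ‖(1 : E)‖ ≤ 1 := by
  rcases subsingleton_or_nontrivial E with _ | _
  · simp [Subsingleton.elim (1 : E) 0]
  · exact CStarRing.norm_one.le

namespace Matrix

theorem PosSemidef.sum_sum_blocks {κ ι : Type*} [Fintype κ] [Fintype ι] [DecidableEq κ]
    {G : Matrix (κ × ι) (κ × ι) ℂ} (hG : G.PosSemidef) :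
    (of fun p q => ∑ a, ∑ b, G (p, a) (q, b)).PosSemidef := by
  convert hG.conjTranspose_mul_mul_same (of fun (x : κ × ι) p => if x.1 = p then (1 : ℂ) else 0)
    using 1
  ext p q
  simp [mul_apply, Fintype.sum_prod_type_right]
  exact Finset.sum_comm

section Blocks

variable {ι₁ ι₂ : Type*} [Fintype ι₁] [Fintype ι₂] [DecidableEq ι₁] [DecidableEq ι₂]

theorem norm_sq_le_of_fromBlocks_posSemidef {A : Matrix ι₁ ι₁ ℂ} {X : Matrix ι₁ ι₂ ℂ}
    {B : Matrix ι₂ ι₂ ℂ} (h : (fromBlocks A X Xᴴ B).PosSemidef) : ‖X‖ ^ 2 ≤ ‖A‖ * ‖B‖ := by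
  obtain ⟨L, hL⟩ := CStarAlgebra.nonneg_iff_eq_star_mul_self.mp h.nonneg
  rw [star_eq_conjTranspose, ← fromCols_toCols L, conjTranspose_fromCols_eq_fromRows_conjTranspose,
    fromRows_mul_fromCols] at hL
  obtain ⟨rfl, rfl, -, rfl⟩ := fromBlocks_inj.mp hL
  rw [l2_opNorm_conjTranspose_mul_self, l2_opNorm_conjTranspose_mul_self,
    ← l2_opNorm_conjTranspose (toCols₁ L)]
  nlinarith [l2_opNorm_mul (toCols₁ L)ᴴ (toCols₂ L), norm_nonneg ((toCols₁ L)ᴴ * toCols₂ L)]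

theorem fromBlocks_norm_smul_one_posSemidef (M : Matrix ι₁ ι₁ ℂ) :
    (fromBlocks ((‖M‖ : ℂ) • 1) M Mᴴ ((‖M‖ : ℂ) • 1)).PosSemidef := by
  rcases (norm_nonneg M).eq_or_lt with hM | hM
  · obtain rfl : M = 0 := norm_eq_zero.mp hM.symm
    simpa using PosSemidef.zero
  have hpos : ((‖M‖ : ℂ) • (1 : Matrix ι₁ ι₁ ℂ)).PosDef := PosDef.one.smul (by exact_mod_cast hM)
  have := hpos.isUnit.invertible
  rw [PosDef.fromBlocks₁₁ _ _ hpos]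
  have hinv : ((‖M‖ : ℂ) • (1 : Matrix ι₁ ι₁ ℂ))⁻¹ = (‖M‖⁻¹ : ℂ) • 1 := by
    refine inv_eq_left_inv ?_
    rw [smul_mul_smul, one_mul, inv_mul_cancel₀ (by exact_mod_cast hM.ne'), one_smul]
  have hMM : ((‖M‖ : ℂ) ^ 2 • (1 : Matrix ι₁ ι₁ ℂ) - Mᴴ * M).PosSemidef := by
    have := CStarAlgebra.star_mul_le_algebraMap_norm_sq (a := M)
    rw [Algebra.algebraMap_eq_smul_one, RCLike.real_smul_eq_coe_smul (K := ℂ)] at this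
    exact_mod_cast this
  have hschur : (‖M‖ : ℂ) • (1 : Matrix ι₁ ι₁ ℂ) - Mᴴ * ((‖M‖ : ℂ) • 1)⁻¹ * M =
      (‖M‖⁻¹ : ℂ) • ((‖M‖ : ℂ) ^ 2 • (1 : Matrix ι₁ ι₁ ℂ) - Mᴴ * M) := by
    rw [hinv, smul_sub, smul_smul, Matrix.mul_smul, mul_one, Matrix.smul_mul]
    congr 2
    field_simp
  rw [hschur]
  exact hMM.smul (by positivity)

end Blocks

variable (κ ι : Type*) [Fintype κ] [DecidableEq κ] [Fintype ι] [DecidableEq ι]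

def oneKroneckerStarAlgHom : Matrix ι ι ℂ →⋆ₐ[ℂ] Matrix (κ × ι) (κ × ι) ℂ where
  toFun B := 1 ⊗ₖ B
  map_one' := one_kronecker_one
  map_mul' A B := by rw [← mul_kronecker_mul, one_mul]
  map_zero' := kronecker_zero _
  map_add' := kronecker_add _
  commutes' c := by simp [Algebra.algebraMap_eq_smul_one, kronecker_smul]
  map_star' B := by simp [star_eq_conjTranspose, conjTranspose_kronecker]

variable {κ ι}

theorem norm_one_kronecker_le (B : Matrix ι ι ℂ) : ‖(1 : Matrix κ κ ℂ) ⊗ₖ B‖ ≤ ‖B‖ :=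
  NonUnitalStarAlgHom.norm_apply_le (oneKroneckerStarAlgHom κ ι) B

end Matrix

section Amplification

variable {n m : ℕ} (φ : Matrix (Fin n) (Fin n) ℂ →ₗ[ℂ] Matrix (Fin m) (Fin m) ℂ) (k : ℕ)

theorem amp_apply_eq_sum_choi (M : Matrix (Fin k × Fin n) (Fin k × Fin n) ℂ)
    (p q : Fin k × Fin m) :
    amp (φ ·) k M p q = ∑ a, ∑ b, M (p.1, a) (q.1, b) * choi φ (a, p.2) (b, q.2) := by
  have hexpand : of (fun a b => M (p.1, a) (q.1, b)) =
      ∑ a, ∑ b, M (p.1, a) (q.1, b) • single a b (1 : ℂ) := by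
    simp only [smul_single, smul_eq_mul, mul_one]
    exact matrix_eq_sum_single _
  change φ (of fun a b => M (p.1, a) (q.1, b)) p.2 q.2 = _
  simp only [hexpand, map_sum, map_smul, Matrix.sum_apply, Matrix.smul_apply, smul_eq_mul, choi]

theorem amp_smul (c : ℂ) (M : Matrix (Fin k × Fin n) (Fin k × Fin n) ℂ) :
    amp (φ ·) k (c • M) = c • amp (φ ·) k M := by
  ext p q
  simp only [amp_apply_eq_sum_choi, Matrix.smul_apply, smul_eq_mul, Finset.mul_sum, mul_assoc]

theorem amp_one : amp (φ ·) k 1 = 1 ⊗ₖ φ 1 := by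
  ext p q
  have hslice : of (fun a b => (1 : Matrix (Fin k × Fin n) (Fin k × Fin n) ℂ) (p.1, a) (q.1, b)) =
      (1 : Matrix (Fin k) (Fin k) ℂ) p.1 q.1 • 1 := by
    ext a b
    by_cases h : p.1 = q.1 <;> simp [one_apply, h]
  change φ (of fun a b => (1 : Matrix (Fin k × Fin n) (Fin k × Fin n) ℂ) (p.1, a) (q.1, b))
    p.2 q.2 = _
  rw [hslice, map_smul, kronecker_apply, Matrix.smul_apply, smul_eq_mul]

theorem norm_amp_smul_one_le {C : ℝ} (hC : 0 ≤ C) (hφ : ∀ x, ‖φ x‖ ≤ C * ‖x‖) {s : ℝ}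
    (hs : 0 ≤ s) : ‖amp (φ ·) k ((s : ℂ) • 1)‖ ≤ s * C := by
  rw [amp_smul, amp_one, norm_smul, Complex.norm_real, Real.norm_of_nonneg hs]
  gcongr
  calc ‖(1 : Matrix (Fin k) (Fin k) ℂ) ⊗ₖ φ 1‖ ≤ ‖φ 1‖ := norm_one_kronecker_le _
    _ ≤ C * ‖(1 : Matrix (Fin n) (Fin n) ℂ)‖ := hφ 1
    _ ≤ C := mul_le_of_le_one_right hC CStarRing.norm_one_le

end Amplification

theorem fromBlocks_amp_posSemidef {n m : ℕ}
    {Ψ Φ₁ Φ₂ : Matrix (Fin n) (Fin n) ℂ →ₗ[ℂ] Matrix (Fin m) (Fin m) ℂ}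
    (hchoi : (fromBlocks (choi Φ₁) (choi Ψ) (choi Ψ)ᴴ (choi Φ₂)).PosSemidef) {k : ℕ}
    {A X B : Matrix (Fin k × Fin n) (Fin k × Fin n) ℂ} (hN : (fromBlocks A X Xᴴ B).PosSemidef) :
    (fromBlocks (amp (Φ₁ ·) k A) (amp (Ψ ·) k X) (amp (Ψ ·) k X)ᴴ
      (amp (Φ₂ ·) k B)).PosSemidef := by
  let row (a : Fin n) (p : Fin k × Fin m) : Fin k × Fin n := (p.1, a)
  let col (a : Fin n) (p : Fin k × Fin m) : Fin n × Fin m := (a, p.2)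
  have := ((hN.kronecker hchoi).submatrix fun x : ((Fin k × Fin m) ⊕ (Fin k × Fin m)) × Fin n =>
    (Sum.map (row x.2) (row x.2) x.1, Sum.map (col x.2) (col x.2) x.1)).sum_sum_blocks
  convert this using 1
  ext (p | p) (q | q) <;> simp [amp_apply_eq_sum_choi, row, col, star_sum]
  exact Finset.sum_comm

theorem stmt7_general (n m : ℕ)
    (Ψ Φ₁ Φ₂ : Matrix (Fin n) (Fin n) ℂ →ₗ[ℂ] Matrix (Fin m) (Fin m) ℂ)
    (hblock : (Matrix.fromBlocks (choi Φ₁) (choi Ψ) (choi Ψ).conjTranspose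
      (choi Φ₂)).PosSemidef)
    (C₁ C₂ : ℝ) (hC₁ : 0 ≤ C₁) (hC₂ : 0 ≤ C₂)
    (hΦ₁ : ∀ x, ‖Φ₁ x‖ ≤ C₁ * ‖x‖) (hΦ₂ : ∀ x, ‖Φ₂ x‖ ≤ C₂ * ‖x‖) :
    ∀ (k : ℕ) (M : Matrix (Fin k × Fin n) (Fin k × Fin n) ℂ),
      ‖amp (Ψ ·) k M‖ ≤ Real.sqrt (C₁ * C₂) * ‖M‖ := by
  intro k M
  have hamp := fromBlocks_amp_posSemidef hblock (fromBlocks_norm_smul_one_posSemidef M)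
  calc ‖amp (Ψ ·) k M‖
      ≤ √(‖amp (Φ₁ ·) k ((‖M‖ : ℂ) • 1)‖ * ‖amp (Φ₂ ·) k ((‖M‖ : ℂ) • 1)‖) :=
        Real.le_sqrt_of_sq_le (norm_sq_le_of_fromBlocks_posSemidef hamp)
    _ ≤ √((‖M‖ * C₁) * (‖M‖ * C₂)) := by
        gcongr
        exacts [norm_amp_smul_one_le Φ₁ k hC₁ hΦ₁ (norm_nonneg M),
          norm_amp_smul_one_le Φ₂ k hC₂ hΦ₂ (norm_nonneg M)]
    _ = √(C₁ * C₂) * ‖M‖ := by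
        rw [show ‖M‖ * C₁ * (‖M‖ * C₂) = C₁ * C₂ * ‖M‖ ^ 2 by ring,
          Real.sqrt_mul (by positivity), Real.sqrt_sq (norm_nonneg M)]

/-- if `Ψ : Mₙ(ℂ) → M_m(ℂ)` admits completely positive maps `Φ₁, Φ₂` such that
`[[Choi(Φ₁), Choi(Ψ)], [Choi(Ψ)*, Choi(Φ₂)]] ≥ 0`, then `‖Ψ‖_cb ≤ √(‖Φ₁‖ ⬝ ‖Φ₂‖)`:
for all norm bounds `C₁, C₂` of `Φ₁, Φ₂`, every amplification of `Ψ` is bounded by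
`√(C₁ C₂)`. -/
theorem stmt7 (n m : ℕ)
    (Ψ Φ₁ Φ₂ : Matrix (Fin n) (Fin n) ℂ →ₗ[ℂ] Matrix (Fin m) (Fin m) ℂ)
    (hcp₁ : IsCompletelyPositive (Φ₁ ·)) (hcp₂ : IsCompletelyPositive (Φ₂ ·))
    (hblock : (Matrix.fromBlocks (choi Φ₁) (choi Ψ) (choi Ψ).conjTranspose
      (choi Φ₂)).PosSemidef)
    (C₁ C₂ : ℝ) (hC₁ : 0 ≤ C₁) (hC₂ : 0 ≤ C₂)
    (hΦ₁ : ∀ x, ‖Φ₁ x‖ ≤ C₁ * ‖x‖) (hΦ₂ : ∀ x, ‖Φ₂ x‖ ≤ C₂ * ‖x‖) :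
    ∀ (k : ℕ) (M : Matrix (Fin k × Fin n) (Fin k × Fin n) ℂ),
      ‖amp (Ψ ·) k M‖ ≤ Real.sqrt (C₁ * C₂) * ‖M‖ :=
  stmt7_general n m Ψ Φ₁ Φ₂ hblock C₁ C₂ hC₁ hC₂ hΦ₁ hΦ₂
end

section
/- Suppose every unital positive map φ : M_n(ℂ) → M_m(ℂ) satisfies ‖φ‖_cb ≤ 1/r for some r > 0 (for all m). Then for every self-adjoint x ∈ M_n ⊗ M_m with ‖x‖ ≤ r, the element 1_n ⊗ 1_m − x is separable. -/
/-! If `1 - x` were not separable, Hahn–Banach would separate it from the closed convex cone of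
separable matrices by a Hermitian `V` with `tr (V (P ⊗ Q)) ≥ 0` for all `P, Q ≥ 0` but
`tr (V (1 - x)) < 0`; adding a small multiple of the identity to `V` keeps both properties and
makes the positive map `φ(A)_{kl} = tr (V (A ⊗ E_kl))` satisfy `φ(1) > 0`, so that
`ψ = φ(1)^{-1/2} φ(·) φ(1)^{-1/2}` is unital and positive. With `ω = ∑ eᵢ ⊗ eᵢ`,
`tr (V y) = ⟨ω, (Id ⊗ φ)(y') ω⟩` where `y'` is `y` with its tensor factors swapped, so
`tr (V (1 - x)) = ⟨ω', (1 - (Id ⊗ ψ)(x')) ω'⟩` for `ω' = (1 ⊗ φ(1)^{1/2}) ω`, and this is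
nonnegative because `‖(Id ⊗ ψ)(x')‖ ≤ ‖x'‖ / r ≤ 1`. -/

open Matrix ComplexOrder Kronecker
open scoped Matrix.Norms.L2Operator

/-- The separable elements of `Mₙ(ℂ) ⊗ M_m(ℂ)`. -/
def Separable (n m : ℕ) : Set (Matrix (Fin n × Fin m) (Fin n × Fin m) ℂ) :=
  closure {X | ∃ (N : ℕ) (P : Fin N → Matrix (Fin n) (Fin n) ℂ)
    (Q : Fin N → Matrix (Fin m) (Fin m) ℂ),
    (∀ t, (P t).PosSemidef) ∧ (∀ t, (Q t).PosSemidef) ∧ X = ∑ t, P t ⊗ₖ Q t}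

variable {𝕜 : Type*} [RCLike 𝕜]

namespace Matrix

lemma IsHermitian.star_trace_mul {p : Type*} [Fintype p] {A B : Matrix p p 𝕜}
    (hA : A.IsHermitian) (hB : B.IsHermitian) : star (A * B).trace = (A * B).trace := by
  rw [← trace_conjTranspose, conjTranspose_mul, hA.eq, hB.eq, trace_mul_comm]

lemma exists_trace_mul_eq {p R : Type*} [Fintype p] [DecidableEq p] [CommSemiring R]
    (g : Matrix p p R →ₗ[R] R) : ∃ W : Matrix p p R, ∀ A, g A = (W * A).trace := by
  refine ⟨of fun j i => g (single i j 1), fun A => ?_⟩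
  have hsingle : ∀ i j, g (single i j (A i j)) = A i j * g (single i j 1) := fun i j => by
    rw [← smul_eq_mul, ← map_smul, smul_single, smul_eq_mul, mul_one]
  conv_lhs => rw [matrix_eq_sum_single A]
  simp only [map_sum, hsingle, trace, diag, mul_apply, of_apply]
  rw [Finset.sum_comm]
  simp only [mul_comm]

lemma exists_isHermitian_re_trace_mul_eq {p : Type*} [Fintype p] [DecidableEq p]
    (g : Matrix p p 𝕜 →ₗ[𝕜] 𝕜) :
    ∃ V : Matrix p p 𝕜, V.IsHermitian ∧
      ∀ A, A.IsHermitian → RCLike.re (V * A).trace = RCLike.re (g A) := by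
  obtain ⟨W, hW⟩ := exists_trace_mul_eq g
  refine ⟨(2⁻¹ : ℝ) • (W + Wᴴ), (isHermitian_add_transpose_self W).smul (.all _), fun A hA => ?_⟩
  have hWH : (Wᴴ * A).trace = star (W * A).trace := by
    rw [← trace_conjTranspose, conjTranspose_mul, hA.eq, trace_mul_comm]
  rw [smul_mul_assoc, trace_smul, add_mul, trace_add, hWH, ← hW, RCLike.smul_re, map_add,
    RCLike.star_def, RCLike.conj_re]
  ring

lemma l2_opNorm_submatrix_equiv_le {p q : Type*} [Fintype p] [Fintype q] [DecidableEq p]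
    [DecidableEq q] (e : q ≃ p) (A : Matrix p p 𝕜) : ‖A.submatrix e e‖ ≤ ‖A‖ := by
  rw [l2_opNorm_def, l2_opNorm_def]
  refine ContinuousLinearMap.opNorm_le_bound _ (norm_nonneg _) fun v => ?_
  let L := LinearIsometryEquiv.piLpCongrLeft 2 𝕜 𝕜 e
  have h : (toEuclideanLin.trans LinearMap.toContinuousLinearMap (A.submatrix e e)) v =
      L.symm ((toEuclideanLin.trans LinearMap.toContinuousLinearMap A) (L v)) := by
    ext i
    simp [L, LinearIsometryEquiv.piLpCongrLeft_apply, mulVec, dotProduct, Equiv.piCongrLeft']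
  rw [h, LinearIsometryEquiv.norm_map]
  calc _ ≤ _ := ContinuousLinearMap.le_opNorm _ _
    _ = _ := by rw [LinearIsometryEquiv.norm_map]

lemma re_star_dotProduct_one_sub_mulVec_nonneg {p : Type*} [Fintype p] [DecidableEq p]
    {Z : Matrix p p 𝕜} (hZ : ‖Z‖ ≤ 1) (w : p → 𝕜) :
    0 ≤ RCLike.re (star w ⬝ᵥ (1 - Z) *ᵥ w) := by
  set w' := (EuclideanSpace.equiv p 𝕜).symm w
  have hZw : RCLike.re (star w ⬝ᵥ Z *ᵥ w) ≤ ‖w'‖ ^ 2 :=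
    calc RCLike.re (star w ⬝ᵥ Z *ᵥ w)
        = RCLike.re (inner 𝕜 w' ((EuclideanSpace.equiv p 𝕜).symm (Z *ᵥ w))) := by
          rw [dotProduct_comm]
          rfl
      _ ≤ ‖w'‖ * ‖(EuclideanSpace.equiv p 𝕜).symm (Z *ᵥ w)‖ := re_inner_le_norm _ _
      _ ≤ ‖w'‖ * (1 * ‖w'‖) := by gcongr; exact (l2_opNorm_mulVec Z w').trans (by gcongr)
      _ = ‖w'‖ ^ 2 := by ring
  have hw : RCLike.re (star w ⬝ᵥ w) = ‖w'‖ ^ 2 := by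
    rw [dotProduct_comm, ← inner_self_eq_norm_sq (𝕜 := 𝕜)]
    rfl
  rw [sub_mulVec, one_mulVec, dotProduct_sub, map_sub, hw]
  linarith

lemma star_dotProduct_conjTranspose_mul_mul_mulVec {q : Type*} [Fintype q] (K Z : Matrix q q 𝕜)
    (w : q → 𝕜) : star w ⬝ᵥ (Kᴴ * Z * K) *ᵥ w = star (K *ᵥ w) ⬝ᵥ Z *ᵥ (K *ᵥ w) := by
  rw [star_mulVec, ← dotProduct_mulVec, mulVec_mulVec, mulVec_mulVec, Matrix.mul_assoc]

lemma star_vec_one_dotProduct_mulVec {q : Type*} [Fintype q] [DecidableEq q]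
    (Z : Matrix (q × q) (q × q) 𝕜) :
    star (vec (1 : Matrix q q 𝕜)) ⬝ᵥ Z *ᵥ vec 1 = ∑ i, ∑ j, Z (i, i) (j, j) := by
  simp [dotProduct, mulVec, vec, one_apply, Fintype.sum_prod_type]

lemma sum_kronecker_single {p q R : Type*} [Fintype q] [DecidableEq q] [CommSemiring R]
    (y : Matrix (p × q) (p × q) R) :
    ∑ i, ∑ j, (of fun a b => y (a, i) (b, j)) ⊗ₖ single i j (1 : R) = y := by
  ext ⟨a, i⟩ ⟨b, j⟩
  simp [sum_apply, single_apply, ite_and]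

end Matrix

open scoped MatrixOrder in
lemma exists_unital_of_posDef_map_one {p q : Type*} [DecidableEq p] [Fintype q] [DecidableEq q]
    (φ : Matrix p p 𝕜 →ₗ[𝕜] Matrix q q 𝕜) (hφ : ∀ A, A.PosSemidef → (φ A).PosSemidef)
    (hφ1 : (φ 1).PosDef) :
    ∃ (b : Matrix q q 𝕜) (ψ : Matrix p p 𝕜 →ₗ[𝕜] Matrix q q 𝕜), b.IsHermitian ∧
      (∀ A, A.PosSemidef → (ψ A).PosSemidef) ∧ ψ 1 = 1 ∧ ∀ A, φ A = b * ψ A * b := by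
  set b := CFC.sqrt (φ 1)
  have hb : b.IsHermitian := (nonneg_iff_posSemidef.mp (CFC.sqrt_nonneg _)).isHermitian
  have hbb : b * b = φ 1 := CFC.sqrt_mul_sqrt_self _ (nonneg_iff_posSemidef.mpr hφ1.posSemidef)
  have hdet : IsUnit b.det := (isUnit_iff_isUnit_det b).mp
    ((Commute.refl b).isUnit_mul_iff.mp (hbb ▸ hφ1.isUnit)).1
  refine ⟨b, LinearMap.mulLeft 𝕜 b⁻¹ ∘ₗ LinearMap.mulRight 𝕜 b⁻¹ ∘ₗ φ, hb, fun A hA => ?_, ?_,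
    fun A => ?_⟩
  · simpa [hb.inv.eq, Matrix.mul_assoc] using (hφ A hA).conjTranspose_mul_mul_same b⁻¹
  · simp [← hbb, nonsing_inv_mul _ hdet, Matrix.mul_assoc, mul_nonsing_inv _ hdet]
  · simp [Matrix.mul_assoc, nonsing_inv_mul _ hdet, mul_nonsing_inv_cancel_left _ _ hdet]

section Witness

variable {p q : Type*} [Fintype p] [Fintype q]

def BlockPositive (V : Matrix (p × q) (p × q) 𝕜) : Prop :=
  ∀ (P : Matrix p p 𝕜) (Q : Matrix q q 𝕜), P.PosSemidef → Q.PosSemidef → 0 ≤ (V * (P ⊗ₖ Q)).trace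

variable [DecidableEq q]

/-- The map `A ↦ (Tr₁ (V (A ⊗ 1)))ᵀ`, whose Choi matrix is `Vᵀ`. -/
def witnessMap (V : Matrix (p × q) (p × q) 𝕜) : Matrix p p 𝕜 →ₗ[𝕜] Matrix q q 𝕜 where
  toFun A := of fun k l => (V * (A ⊗ₖ single k l 1)).trace
  map_add' A B := by ext; simp [add_kronecker, mul_add]
  map_smul' c A := by ext; simp [smul_kronecker]

lemma witnessMap_apply (V : Matrix (p × q) (p × q) 𝕜) (A : Matrix p p 𝕜) (k l : q) :
    witnessMap V A k l = (V * (A ⊗ₖ single k l 1)).trace := rfl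

lemma trace_mul_kronecker_eq_sum (V : Matrix (p × q) (p × q) 𝕜) (A : Matrix p p 𝕜)
    (B : Matrix q q 𝕜) : (V * (A ⊗ₖ B)).trace = ∑ k, ∑ l, B k l * witnessMap V A k l := by
  have hlin : A ⊗ₖ B = kroneckerBilinear (R := 𝕜) A B := rfl
  conv_lhs => rw [hlin, matrix_eq_sum_single B]
  simp only [map_sum, Matrix.mul_sum, trace_sum]
  refine Finset.sum_congr rfl fun k _ => Finset.sum_congr rfl fun l _ => ?_
  have hs : single k l (B k l) = B k l • single k l (1 : 𝕜) := by
    rw [smul_single, smul_eq_mul, mul_one]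
  rw [hs, map_smul, Matrix.mul_smul, trace_smul, smul_eq_mul]
  rfl

lemma star_dotProduct_witnessMap_mulVec (V : Matrix (p × q) (p × q) 𝕜) (A : Matrix p p 𝕜)
    (v : q → 𝕜) :
    star v ⬝ᵥ witnessMap V A *ᵥ v = (V * (A ⊗ₖ vecMulVec (star v) v)).trace := by
  simp only [trace_mul_kronecker_eq_sum, dotProduct, mulVec, Finset.mul_sum, vecMulVec_apply]
  exact Finset.sum_congr rfl fun k _ => Finset.sum_congr rfl fun l _ => by ring

lemma isHermitian_witnessMap {V : Matrix (p × q) (p × q) 𝕜} (hV : V.IsHermitian)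
    {A : Matrix p p 𝕜} (hA : A.IsHermitian) : (witnessMap V A).IsHermitian := by
  ext k l
  rw [conjTranspose_apply, witnessMap_apply, witnessMap_apply, ← trace_conjTranspose,
    conjTranspose_mul, ← trace_mul_comm, hV.eq, conjTranspose_kronecker, hA.eq,
    conjTranspose_single, star_one]

lemma BlockPositive.posSemidef_witnessMap {V : Matrix (p × q) (p × q) 𝕜} (hV : V.IsHermitian)
    (hVb : BlockPositive V) {A : Matrix p p 𝕜} (hA : A.PosSemidef) :
    (witnessMap V A).PosSemidef :=
  .of_dotProduct_mulVec_nonneg (isHermitian_witnessMap hV hA.isHermitian) fun v => by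
    rw [star_dotProduct_witnessMap_mulVec]
    exact hVb _ _ hA (posSemidef_vecMulVec_star_self v)

variable [DecidableEq p]

lemma BlockPositive.add_smul_one {V : Matrix (p × q) (p × q) 𝕜} (hVb : BlockPositive V) {c : ℝ}
    (hc : 0 ≤ c) : BlockPositive (V + c • 1) := fun P Q hP hQ => by
  rw [add_mul, trace_add, smul_mul_assoc, one_mul, trace_smul, trace_kronecker]
  exact add_nonneg (hVb P Q hP hQ) (smul_nonneg hc (mul_nonneg hP.trace_nonneg hQ.trace_nonneg))

lemma witnessMap_add_smul_one_apply (V : Matrix (p × q) (p × q) 𝕜) (c : ℝ) (A : Matrix p p 𝕜) :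
    witnessMap (V + c • 1) A = witnessMap V A + (c • A.trace) • 1 := by
  ext k l
  obtain rfl | hkl := eq_or_ne k l
  · simp [witnessMap_apply, add_mul, trace_kronecker]
  · simp [witnessMap_apply, add_mul, trace_kronecker, trace_single_eq_of_ne, hkl]

lemma BlockPositive.posDef_witnessMap_add_smul_one_one [Nonempty p]
    {V : Matrix (p × q) (p × q) 𝕜} (hV : V.IsHermitian) (hVb : BlockPositive V) {c : ℝ}
    (hc : 0 < c) : (witnessMap (V + c • 1) 1).PosDef := by
  rw [witnessMap_add_smul_one_apply]
  refine PosDef.posSemidef_add (hVb.posSemidef_witnessMap hV PosSemidef.one) (PosDef.one.smul ?_)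
  rw [trace_one]
  exact smul_pos hc (by exact_mod_cast Fintype.card_pos)

end Witness

/-- `Separable n m` is the closure of this convex cone. -/
def separableSums (n m : ℕ) : Set (Matrix (Fin n × Fin m) (Fin n × Fin m) ℂ) :=
  {X | ∃ (N : ℕ) (P : Fin N → Matrix (Fin n) (Fin n) ℂ) (Q : Fin N → Matrix (Fin m) (Fin m) ℂ),
    (∀ t, (P t).PosSemidef) ∧ (∀ t, (Q t).PosSemidef) ∧ X = ∑ t, P t ⊗ₖ Q t}

namespace separableSums

variable {n m : ℕ}

lemma zero_mem : 0 ∈ separableSums n m :=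
  ⟨0, Fin.elim0, Fin.elim0, fun t => t.elim0, fun t => t.elim0, by simp⟩

lemma kronecker_mem {P : Matrix (Fin n) (Fin n) ℂ} {Q : Matrix (Fin m) (Fin m) ℂ}
    (hP : P.PosSemidef) (hQ : Q.PosSemidef) : P ⊗ₖ Q ∈ separableSums n m :=
  ⟨1, fun _ => P, fun _ => Q, fun _ => hP, fun _ => hQ, by simp⟩

lemma add_mem {X Y : Matrix (Fin n × Fin m) (Fin n × Fin m) ℂ}
    (hX : X ∈ separableSums n m) (hY : Y ∈ separableSums n m) : X + Y ∈ separableSums n m := by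
  obtain ⟨N, P, Q, hP, hQ, rfl⟩ := hX
  obtain ⟨N', P', Q', hP', hQ', rfl⟩ := hY
  refine ⟨N + N', Fin.append P P', Fin.append Q Q', Fin.addCases (by simpa) (by simpa),
    Fin.addCases (by simpa) (by simpa), ?_⟩
  simp [Fin.sum_univ_add]

lemma smul_mem {X : Matrix (Fin n × Fin m) (Fin n × Fin m) ℂ} (hX : X ∈ separableSums n m)
    {c : ℝ} (hc : 0 ≤ c) : c • X ∈ separableSums n m := by
  obtain ⟨N, P, Q, hP, hQ, rfl⟩ := hX
  refine ⟨N, fun t => c • P t, Q, fun t => (hP t).smul hc, hQ, ?_⟩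
  simp [Finset.smul_sum, smul_kronecker]

lemma convex : Convex ℝ (separableSums n m) :=
  fun _ hX _ hY _ _ ha hb _ => add_mem (smul_mem hX ha) (smul_mem hY hb)

end separableSums

section Separable

variable {n m : ℕ}

lemma exists_blockPositive_of_notMem_separable {y : Matrix (Fin n × Fin m) (Fin n × Fin m) ℂ}
    (hy : y.IsHermitian) (hsep : y ∉ Separable n m) :
    ∃ V, V.IsHermitian ∧ BlockPositive V ∧ (V * y).trace.re < 0 := by
  obtain ⟨g, u, hg, hgy⟩ := RCLike.geometric_hahn_banach_closed_point (𝕜 := ℂ)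
    separableSums.convex.closure isClosed_closure hsep
  have hu : 0 < u := by simpa using hg 0 (subset_closure separableSums.zero_mem)
  -- `separableSums` is a cone, so `re ∘ g` is bounded above on it only if it is `≤ 0` there.
  have hg_nonpos : ∀ X ∈ separableSums n m, RCLike.re (g X) ≤ 0 := by
    intro X hX
    by_contra! hpos
    have := hg _ (subset_closure (separableSums.smul_mem hX (div_pos hu hpos).le))
    rw [g.map_smul_of_tower, RCLike.smul_re, div_mul_cancel₀ _ hpos.ne'] at this
    exact this.false
  obtain ⟨V, hV, hVg⟩ := exists_isHermitian_re_trace_mul_eq g.toLinearMap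
  simp only [ContinuousLinearMap.coe_coe] at hVg
  refine ⟨-V, hV.neg, fun P Q hP hQ => ?_, ?_⟩
  · have hPQ := (hP.kronecker hQ).isHermitian
    rw [RCLike.nonneg_iff, ← RCLike.conj_eq_iff_im, ← RCLike.star_def, hV.neg.star_trace_mul hPQ]
    refine ⟨?_, rfl⟩
    rw [neg_mul, trace_neg, map_neg, hVg _ hPQ]
    simpa using hg_nonpos _ (separableSums.kronecker_mem hP hQ)
  · rw [neg_mul, trace_neg, Complex.neg_re, neg_neg_iff_pos]
    exact hu.trans (hgy.trans_eq (hVg y hy).symm)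

lemma exists_witness_of_notMem_separable [NeZero n]
    {y : Matrix (Fin n × Fin m) (Fin n × Fin m) ℂ} (hy : y.IsHermitian) (hsep : y ∉ Separable n m) :
    ∃ V, V.IsHermitian ∧ BlockPositive V ∧ (witnessMap V 1).PosDef ∧ (V * y).trace.re < 0 := by
  obtain ⟨V, hV, hVb, hVy⟩ := exists_blockPositive_of_notMem_separable hy hsep
  obtain ⟨ε, hε, hεy⟩ := exists_pos_mul_lt (neg_pos.mpr hVy) y.trace.re
  refine ⟨V + ε • 1, hV.add (isHermitian_one.smul (.all ε)), hVb.add_smul_one hε.le,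
    hVb.posDef_witnessMap_add_smul_one_one hV hε, ?_⟩
  rw [add_mul, trace_add, smul_mul_assoc, one_mul, trace_smul, Complex.add_re, Complex.smul_re,
    smul_eq_mul]
  linarith

lemma amp_one_sub {k : ℕ} (ψ : Matrix (Fin n) (Fin n) ℂ →ₗ[ℂ] Matrix (Fin m) (Fin m) ℂ)
    (hψ : ψ 1 = 1) (M : Matrix (Fin k × Fin n) (Fin k × Fin n) ℂ) :
    amp (ψ ·) k (1 - M) = 1 - amp (ψ ·) k M := by
  have hblock : ∀ i j, (of fun a b => (1 - M) (i, a) (j, b)) =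
      (if i = j then 1 else 0) - of fun a b => M (i, a) (j, b) := by
    intro i j
    ext a b
    by_cases hij : i = j <;> simp [one_apply, hij]
  ext ⟨i, a⟩ ⟨j, b⟩
  change ψ (of fun a b => (1 - M) (i, a) (j, b)) a b = _
  rw [hblock, map_sub, apply_ite ψ, hψ, map_zero]
  by_cases hij : i = j <;> simp [amp, one_apply, hij] <;> rfl

lemma amp_mul_mul {k : ℕ} (b : Matrix (Fin m) (Fin m) ℂ)
    (φ : Matrix (Fin n) (Fin n) ℂ → Matrix (Fin m) (Fin m) ℂ)
    (M : Matrix (Fin k × Fin n) (Fin k × Fin n) ℂ) :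
    amp (fun A => b * φ A * b) k M = (1 ⊗ₖ b) * amp φ k M * (1 ⊗ₖ b) := by
  ext ⟨i, a⟩ ⟨j, c⟩
  simp [amp, mul_apply, one_apply, Fintype.sum_prod_type]

lemma trace_mul_eq_star_vec_one_dotProduct_amp (V y : Matrix (Fin n × Fin m) (Fin n × Fin m) ℂ) :
    (V * y).trace = star (vec 1) ⬝ᵥ
      amp (witnessMap V ·) m (y.submatrix (Equiv.prodComm _ _) (Equiv.prodComm _ _)) *ᵥ vec 1 := by
  rw [star_vec_one_dotProduct_mulVec]
  conv_lhs => rw [← sum_kronecker_single y]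
  simp only [Matrix.mul_sum, trace_sum]
  rfl

lemma re_trace_mul_one_sub_nonneg {V : Matrix (Fin n × Fin m) (Fin n × Fin m) ℂ}
    (hV : V.IsHermitian) (hVb : BlockPositive V) (hV1 : (witnessMap V 1).PosDef)
    {x : Matrix (Fin n × Fin m) (Fin n × Fin m) ℂ}
    (hx : ∀ ψ : Matrix (Fin n) (Fin n) ℂ →ₗ[ℂ] Matrix (Fin m) (Fin m) ℂ,
      (∀ A, A.PosSemidef → (ψ A).PosSemidef) → ψ 1 = 1 →
        ‖amp (ψ ·) m (x.submatrix (Equiv.prodComm _ _) (Equiv.prodComm _ _))‖ ≤ 1) :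
    0 ≤ (V * (1 - x)).trace.re := by
  obtain ⟨b, ψ, hb, hψ, hψ1, hφψ⟩ :=
    exists_unital_of_posDef_map_one (witnessMap V) (fun _ => hVb.posSemidef_witnessMap hV) hV1
  set e := Equiv.prodComm (Fin m) (Fin n)
  have hamp : amp (witnessMap V ·) m ((1 - x).submatrix e e) =
      (1 ⊗ₖ b)ᴴ * (1 - amp (ψ ·) m (x.submatrix e e)) * (1 ⊗ₖ b) := by
    have hsub : (1 - x).submatrix e e = 1 - x.submatrix e e := by
      rw [← submatrix_one_equiv e]
      rfl
    rw [conjTranspose_kronecker, conjTranspose_one, hb.eq, ← amp_one_sub ψ hψ1, ← amp_mul_mul, hsub]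
    simp only [hφψ]
  rw [trace_mul_eq_star_vec_one_dotProduct_amp, hamp, star_dotProduct_conjTranspose_mul_mul_mulVec]
  exact re_star_dotProduct_one_sub_mulVec_nonneg (hx ψ hψ hψ1) _

end Separable

/-- if `r > 0` and every unital positive map `φ : Mₙ(ℂ) → M_m(ℂ)` satisfies
`‖φ‖_cb ≤ 1/r`, then for every self-adjoint `x ∈ Mₙ ⊗ M_m` with `‖x‖ ≤ r` the element
`1ₙ ⊗ 1_m − x` is separable. -/
theorem stmt11 (n m : ℕ) (r : ℝ) (hr : 0 < r)
    (hcb : ∀ φ : Matrix (Fin n) (Fin n) ℂ →ₗ[ℂ] Matrix (Fin m) (Fin m) ℂ,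
      (∀ M : Matrix (Fin n) (Fin n) ℂ, M.PosSemidef → (φ M).PosSemidef) →
      φ 1 = 1 →
      ∀ (k : ℕ) (M : Matrix (Fin k × Fin n) (Fin k × Fin n) ℂ),
        ‖amp (φ ·) k M‖ ≤ (1 / r) * ‖M‖) :
    ∀ x : Matrix (Fin n × Fin m) (Fin n × Fin m) ℂ,
      x.IsHermitian → ‖x‖ ≤ r → (1 - x) ∈ Separable n m := by
  intro x hx hxr
  rcases eq_zero_or_neZero n with rfl | hn
  · exact Subsingleton.elim (0 : Matrix _ _ ℂ) (1 - x) ▸ subset_closure separableSums.zero_mem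
  by_contra hsep
  obtain ⟨V, hV, hVb, hV1, hVy⟩ := exists_witness_of_notMem_separable (isHermitian_one.sub hx) hsep
  refine hVy.not_ge (re_trace_mul_one_sub_nonneg hV hVb hV1 fun ψ hψ hψ1 => ?_)
  calc ‖amp (ψ ·) m _‖ ≤ 1 / r * ‖x.submatrix _ _‖ := hcb ψ hψ hψ1 m _
    _ ≤ 1 / r * r := by gcongr; exact (l2_opNorm_submatrix_equiv_le _ x).trans hxr
    _ = 1 := by field_simp
end
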